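/- arXiv:1706.07640 — 2 statements merged into one kernel-verified Lean document; each statement's English description precedes it below -/
import Mathlib

section
/- Assume that every diagonal entry of B is nonzero and that every row of B̃ is nonzero. Let D be the diagonal part of B and R = B − D. Given x₁ ∈ ℝ^m and x₂ ∈ ℝ^p, define one generalized Jacobi iteration by: d ∈ ℝ^m with d_i = (b_i − B_i·x₁ − B̃_i·x₂)/(m·‖B̃_i‖₁); x₂' = x₂ + s(B̃)·d; b̂ = b − B̃·x₂'; and x₁' = D⁻¹·(−R·x₁ + b̂). Then the new residual satisfies (B·x₁' + B̃·x₂' − b) = (I − B·D⁻¹)·(I − (1/m)·B̃·s(B̃)·N(B̃)⁻¹)·(B·x₁ + B̃·x₂ − b), where I is the m×m identity matrix. -/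
/-! The iteration is two successive updates, each multiplying the residual by one factor.
Updating `x₂` adds `B̃ s d` to the residual `r`, and `d = -(1/m) N⁻¹ r`, which gives the right
factor. Updating `x₁` is one step of the splitting iteration for `B = D + R` with right-hand side
`b̂`; it amounts to `x₁' = x₁ - D⁻¹ r'`, where `r'` is the current residual, so it multiplies the
residual by `I - B D⁻¹`. -/

open Matrix

theorem Matrix.inv_diagonal_mulVec_of_ne_zero {n K : Type*} [Fintype n] [DecidableEq n] [Field K]
    {v : n → K} (hv : ∀ i, v i ≠ 0) (r : n → K) :
    (diagonal v)⁻¹ *ᵥ r = fun i => r i / v i := by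
  have hinv : (diagonal v)⁻¹ = diagonal v⁻¹ :=
    inv_eq_right_inv <| by rw [diagonal_mul_diagonal, ← diagonal_one]; simp [hv]
  ext i
  simp [hinv, mulVec_diagonal, div_eq_inv_mul]

theorem Finset.sum_abs_pos_of_ne_zero {ι α : Type*} [Fintype ι] [AddCommGroup α] [LinearOrder α]
    [IsOrderedAddMonoid α] {v : ι → α} (hv : v ≠ 0) : 0 < ∑ j, |v j| := by
  obtain ⟨j, hj⟩ := Function.ne_iff.mp hv
  exact (abs_pos.mpr hj).trans_le <|
    Finset.single_le_sum (fun k _ => abs_nonneg (v k)) (Finset.mem_univ j)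

theorem Matrix.splitting_step_residual {n R : Type*} [Fintype n] [DecidableEq n] [CommRing R]
    (B D : Matrix n n R) (hD : IsUnit D.det) (x c : n → R) :
    B *ᵥ (D⁻¹ *ᵥ (-((B - D) *ᵥ x) + c)) - c = (1 - B * D⁻¹) *ᵥ (B *ᵥ x - c) := by
  have hx' : D⁻¹ *ᵥ (-((B - D) *ᵥ x) + c) = x - D⁻¹ *ᵥ (B *ᵥ x - c) := by
    rw [show -((B - D) *ᵥ x) + c = D *ᵥ x - (B *ᵥ x - c) by rw [sub_mulVec]; abel,
      mulVec_sub, mulVec_mulVec, nonsing_inv_mul D hD, one_mulVec]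
  rw [hx', mulVec_sub, mulVec_mulVec, sub_mulVec, one_mulVec]
  abel

theorem Matrix.add_mulVec_neg_smul_mulVec {m R : Type*} [Fintype m] [DecidableEq m] [CommRing R]
    (M P : Matrix m m R) (c : R) (r : m → R) :
    r + M *ᵥ -(c • P *ᵥ r) = (1 - c • (M * P)) *ᵥ r := by
  rw [mulVec_neg, mulVec_smul, mulVec_mulVec, sub_mulVec, one_mulVec, smul_mulVec, sub_eq_add_neg]

theorem generalized_jacobi_residual_formula_general
    (m p : ℕ)
    (B : Matrix (Fin m) (Fin m) ℝ) (Bt : Matrix (Fin m) (Fin p) ℝ) (b : Fin m → ℝ)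
    (hDiag : ∀ i, B i i ≠ 0) (hRows : ∀ i, Bt i ≠ 0)
    (s : Matrix (Fin p) (Fin m) ℝ)
    (N : Matrix (Fin m) (Fin m) ℝ)
    (hN : N = Matrix.diagonal (fun i => ∑ j, |Bt i j|))
    (D : Matrix (Fin m) (Fin m) ℝ) (hD : D = Matrix.diagonal (fun i => B i i))
    (R : Matrix (Fin m) (Fin m) ℝ) (hR : R = B - D)
    (x₁ : Fin m → ℝ) (x₂ : Fin p → ℝ)
    (d : Fin m → ℝ)
    (hd : ∀ i, d i = (b i - (B.mulVec x₁) i - (Bt.mulVec x₂) i) /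
      ((m : ℝ) * ∑ j, |Bt i j|))
    (x₂' : Fin p → ℝ) (hx₂' : x₂' = x₂ + s.mulVec d)
    (bhat : Fin m → ℝ) (hbhat : bhat = b - Bt.mulVec x₂')
    (x₁' : Fin m → ℝ) (hx₁' : x₁' = D⁻¹.mulVec (-(R.mulVec x₁) + bhat)) :
    B.mulVec x₁' + Bt.mulVec x₂' - b =
      ((1 - B * D⁻¹) * (1 - (1 / (m : ℝ)) • (Bt * s * N⁻¹))).mulVec
        (B.mulVec x₁ + Bt.mulVec x₂ - b) := by
  set r := B *ᵥ x₁ + Bt *ᵥ x₂ - b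
  have hN_ne : ∀ i, ∑ j, |Bt i j| ≠ 0 := fun i => (Finset.sum_abs_pos_of_ne_zero (hRows i)).ne'
  have hd_eq : d = -((1 / (m : ℝ)) • N⁻¹ *ᵥ r) := by
    ext i
    have hm : (m : ℝ) ≠ 0 := Nat.cast_ne_zero.mpr i.pos.ne'
    have hNi := hN_ne i
    rw [hd, hN, inv_diagonal_mulVec_of_ne_zero hN_ne]
    simp only [r, Pi.neg_apply, Pi.smul_apply, Pi.add_apply, Pi.sub_apply, smul_eq_mul]
    field_simp
    ring
  have hD_unit : IsUnit D.det := by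
    rw [hD, det_diagonal]
    exact (Finset.prod_ne_zero_iff.mpr fun i _ => hDiag i).isUnit
  have hx₂_step : B *ᵥ x₁ + Bt *ᵥ x₂' - b = (1 - (1 / (m : ℝ)) • (Bt * s * N⁻¹)) *ᵥ r := by
    rw [hx₂', mulVec_add, mulVec_mulVec, hd_eq, ← add_mulVec_neg_smul_mulVec, ← mulVec_mulVec]
    simp only [r]
    abel
  calc B *ᵥ x₁' + Bt *ᵥ x₂' - b = B *ᵥ x₁' - bhat := by rw [hbhat]; abel
    _ = (1 - B * D⁻¹) *ᵥ (B *ᵥ x₁ - bhat) := by rw [hx₁', hR, splitting_step_residual B D hD_unit]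
    _ = _ := by rw [← mulVec_mulVec, ← hx₂_step, hbhat]; congr 1; abel

/-- one generalized Jacobi iteration maps the residual by
`(B x₁' + B̃ x₂' − b) = (I − B D⁻¹)(I − (1/m) B̃ s(B̃) N(B̃)⁻¹)(B x₁ + B̃ x₂ − b)`. -/
theorem generalized_jacobi_residual_formula
    (m p : ℕ) (hm : 0 < m) (hp : 0 < p)
    (B : Matrix (Fin m) (Fin m) ℝ) (Bt : Matrix (Fin m) (Fin p) ℝ) (b : Fin m → ℝ)
    (hDiag : ∀ i, B i i ≠ 0) (hRows : ∀ i, Bt i ≠ 0)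
    (s : Matrix (Fin p) (Fin m) ℝ) (hs : ∀ j i, s j i = Real.sign (Bt i j))
    (N : Matrix (Fin m) (Fin m) ℝ)
    (hN : N = Matrix.diagonal (fun i => ∑ j, |Bt i j|))
    (D : Matrix (Fin m) (Fin m) ℝ) (hD : D = Matrix.diagonal (fun i => B i i))
    (R : Matrix (Fin m) (Fin m) ℝ) (hR : R = B - D)
    (x₁ : Fin m → ℝ) (x₂ : Fin p → ℝ)
    (d : Fin m → ℝ)
    (hd : ∀ i, d i = (b i - (B.mulVec x₁) i - (Bt.mulVec x₂) i) /
      ((m : ℝ) * ∑ j, |Bt i j|))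
    (x₂' : Fin p → ℝ) (hx₂' : x₂' = x₂ + s.mulVec d)
    (bhat : Fin m → ℝ) (hbhat : bhat = b - Bt.mulVec x₂')
    (x₁' : Fin m → ℝ) (hx₁' : x₁' = D⁻¹.mulVec (-(R.mulVec x₁) + bhat)) :
    B.mulVec x₁' + Bt.mulVec x₂' - b =
      ((1 - B * D⁻¹) * (1 - (1 / (m : ℝ)) • (Bt * s * N⁻¹))).mulVec
        (B.mulVec x₁ + Bt.mulVec x₂ - b) :=
  generalized_jacobi_residual_formula_general m p B Bt b hDiag hRows s N hN D hD R hR x₁ x₂ d hd x₂'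
    hx₂' bhat hbhat x₁' hx₁'
end

section
/- Assume that every diagonal entry of B is nonzero and every row of B̃ is nonzero. Let D be the diagonal part of B and R = B − D. Let sequences x₁^(k) ∈ ℝ^m and x₂^(k) ∈ ℝ^p satisfy, for all k ≥ 0: x₂^(k+1) = x₂^(k) + s(B̃)·d^(k) with d^(k)_i = (b_i − B_i·x₁^(k) − B̃_i·x₂^(k))/(m·‖B̃_i‖₁), and x₁^(k+1) = D⁻¹·(−R·x₁^(k) + b − B̃·x₂^(k+1)). Set q = ‖I − B·D⁻¹‖₁ · ‖I − (1/m)·B̃·s(B̃)·N(B̃)⁻¹‖₁, where ‖·‖₁ is the ℓ1 operator norm. If q < 1, then for every k, ‖B·x₁^(k) + B̃·x₂^(k) − b‖₁ ≤ q^k · ‖B·x₁^(0) + B̃·x₂^(0) − b‖₁; in particular the residuals B·x₁^(k) + B̃·x₂^(k) − b converge to the zero vector as k → ∞. -/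
/-!
Write `r = B x₁ + B̃ x₂ - b` for the residual. The `x₂`-update is a damped correction
`x₂ ↦ x₂ - s N⁻¹ r / m`, which multiplies the residual by `I - B̃ s N⁻¹ / m`; the
`x₁`-update is a Jacobi step `D x₁' = D x₁ - r`, which multiplies it by `I - B D⁻¹`.
One sweep therefore multiplies the residual by the product of these two matrices, whose
ℓ1 operator norms multiply to `q`, so the ℓ1 norm of the residual decays like `q ^ k`.
-/

/-- The ℓ1-norm of a vector: sum of absolute values of its entries. -/
noncomputable def vecL1 {n : ℕ} (v : Fin n → ℝ) : ℝ := ∑ i, |v i|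

/-- The ℓ1 operator norm of a matrix: the maximum absolute column sum. -/
noncomputable def matL1 {a c : ℕ} (M : Matrix (Fin a) (Fin c) ℝ) : ℝ :=
  ⨆ j, ∑ i, |M i j|

open Matrix Filter Topology

section Residual

variable {ι κ R : Type*} [Fintype ι] [Fintype κ] [DecidableEq ι] [CommRing R]

def blockResidual (B : Matrix ι ι R) (C : Matrix ι κ R) (b : ι → R) (x₁ : ι → R) (x₂ : κ → R) :
    ι → R :=
  B *ᵥ x₁ + C *ᵥ x₂ - b

theorem blockResidual_add_mulVec_mulVec_neg_smul {ν : Type*} [Fintype ν]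
    (B : Matrix ι ι R) (C : Matrix ι κ R) (b : ι → R) (x₁ : ι → R) (x₂ : κ → R)
    (S : Matrix κ ν R) (W : Matrix ν ι R) (c : R) :
    blockResidual B C b x₁ (x₂ + S *ᵥ (W *ᵥ (-c • blockResidual B C b x₁ x₂))) =
      (1 - c • (C * S * W)) *ᵥ blockResidual B C b x₁ x₂ := by
  rw [blockResidual, mulVec_add, mulVec_mulVec, mulVec_mulVec, mulVec_smul,
    sub_mulVec, one_mulVec, smul_mulVec, neg_smul, blockResidual]
  abel

theorem blockResidual_jacobi_step (B D : Matrix ι ι R) (hD : IsUnit D.det) (C : Matrix ι κ R)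
    (b : ι → R) (x₁ : ι → R) (x₂ : κ → R) :
    blockResidual B C b (D⁻¹ *ᵥ (-((B - D) *ᵥ x₁) + (b - C *ᵥ x₂))) x₂ =
      (1 - B * D⁻¹) *ᵥ blockResidual B C b x₁ x₂ := by
  have hDx : -((B - D) *ᵥ x₁) + (b - C *ᵥ x₂) = D *ᵥ x₁ - blockResidual B C b x₁ x₂ := by
    simp only [blockResidual, sub_mulVec]
    abel
  rw [hDx, mulVec_sub, mulVec_mulVec, nonsing_inv_mul D hD, one_mulVec]
  simp only [blockResidual, mulVec_sub, sub_mulVec, one_mulVec, mulVec_mulVec]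
  abel

end Residual

theorem inv_diagonal_of_ne_zero {ι K : Type*} [Fintype ι] [DecidableEq ι] [Field K]
    {v : ι → K} (hv : ∀ i, v i ≠ 0) : (diagonal v)⁻¹ = diagonal fun i => (v i)⁻¹ := by
  refine inv_eq_right_inv ?_
  rw [diagonal_mul_diagonal, ← diagonal_one]
  exact congrArg diagonal (funext fun i => mul_inv_cancel₀ (hv i))

section L1

variable {n a c : ℕ}

theorem abs_le_vecL1 (v : Fin n → ℝ) (i : Fin n) : |v i| ≤ vecL1 v :=
  Finset.single_le_sum (f := fun j => |v j|) (fun _ _ => abs_nonneg _) (Finset.mem_univ i)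

theorem vecL1_ne_zero {v : Fin n → ℝ} (hv : v ≠ 0) : vecL1 v ≠ 0 := by
  obtain ⟨i, hi⟩ := Function.ne_iff.mp hv
  exact ((abs_pos.mpr hi).trans_le (abs_le_vecL1 v i)).ne'

theorem matL1_nonneg (M : Matrix (Fin a) (Fin c) ℝ) : 0 ≤ matL1 M :=
  Real.iSup_nonneg fun _ => Finset.sum_nonneg fun _ _ => abs_nonneg _

theorem sum_abs_le_matL1 (M : Matrix (Fin a) (Fin c) ℝ) (j : Fin c) :
    ∑ i, |M i j| ≤ matL1 M :=
  le_ciSup (f := fun j => ∑ i, |M i j|) (Set.finite_range _).bddAbove j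

theorem vecL1_mulVec_le (M : Matrix (Fin a) (Fin c) ℝ) (v : Fin c → ℝ) :
    vecL1 (M *ᵥ v) ≤ matL1 M * vecL1 v :=
  calc vecL1 (M *ᵥ v) ≤ ∑ i, ∑ j, |M i j| * |v j| :=
        Finset.sum_le_sum fun i _ =>
          (Finset.abs_sum_le_sum_abs (fun j => M i j * v j) Finset.univ).trans_eq <|
            Finset.sum_congr rfl fun j _ => abs_mul _ _
    _ = ∑ j, (∑ i, |M i j|) * |v j| := by
        rw [Finset.sum_comm]
        simp only [Finset.sum_mul]
    _ ≤ ∑ j, matL1 M * |v j| :=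
        Finset.sum_le_sum fun j _ =>
          mul_le_mul_of_nonneg_right (sum_abs_le_matL1 M j) (abs_nonneg _)
    _ = matL1 M * vecL1 v := by rw [vecL1, Finset.mul_sum]

theorem tendsto_zero_of_vecL1_le_geometric {r : ℕ → Fin n → ℝ} {q C : ℝ} (hq0 : 0 ≤ q)
    (hq1 : q < 1) (hr : ∀ k, vecL1 (r k) ≤ q ^ k * C) : Tendsto r atTop (𝓝 0) := by
  have hgeom : Tendsto (fun k => q ^ k * C) atTop (𝓝 0) := by
    simpa using (tendsto_pow_atTop_nhds_zero_of_lt_one hq0 hq1).mul_const C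
  refine tendsto_pi_nhds.mpr fun i => squeeze_zero_norm (fun k => ?_) hgeom
  exact (abs_le_vecL1 (r k) i).trans (hr k)

end L1

theorem generalized_jacobi_residual_convergence_general
    (m p : ℕ)
    (B : Matrix (Fin m) (Fin m) ℝ) (Bt : Matrix (Fin m) (Fin p) ℝ) (b : Fin m → ℝ)
    (hDiag : ∀ i, B i i ≠ 0) (hRows : ∀ i, Bt i ≠ 0)
    (s : Matrix (Fin p) (Fin m) ℝ)
    (N : Matrix (Fin m) (Fin m) ℝ)
    (hN : N = Matrix.diagonal (fun i => ∑ j, |Bt i j|))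
    (D : Matrix (Fin m) (Fin m) ℝ) (hD : D = Matrix.diagonal (fun i => B i i))
    (R : Matrix (Fin m) (Fin m) ℝ) (hR : R = B - D)
    (x₁ : ℕ → Fin m → ℝ) (x₂ : ℕ → Fin p → ℝ)
    (d : ℕ → Fin m → ℝ)
    (hd : ∀ k i, d k i = (b i - (B.mulVec (x₁ k)) i - (Bt.mulVec (x₂ k)) i) /
      ((m : ℝ) * ∑ j, |Bt i j|))
    (hx₂ : ∀ k, x₂ (k + 1) = x₂ k + s.mulVec (d k))
    (hx₁ : ∀ k, x₁ (k + 1) = D⁻¹.mulVec (-(R.mulVec (x₁ k)) + (b - Bt.mulVec (x₂ (k + 1)))))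
    (q : ℝ)
    (hq : q = matL1 (1 - B * D⁻¹) * matL1 (1 - (1 / (m : ℝ)) • (Bt * s * N⁻¹)))
    (hq1 : q < 1) :
    (∀ k, vecL1 (B.mulVec (x₁ k) + Bt.mulVec (x₂ k) - b) ≤
        q ^ k * vecL1 (B.mulVec (x₁ 0) + Bt.mulVec (x₂ 0) - b)) ∧
    Filter.Tendsto (fun k => B.mulVec (x₁ k) + Bt.mulVec (x₂ k) - b)
      Filter.atTop (nhds 0) := by
  set r : ℕ → Fin m → ℝ := fun k => blockResidual B Bt b (x₁ k) (x₂ k)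
  have hNinv : N⁻¹ = diagonal fun i => (∑ j, |Bt i j|)⁻¹ :=
    hN ▸ inv_diagonal_of_ne_zero fun i => vecL1_ne_zero (hRows i)
  have hDunit : IsUnit D.det := (isUnit_iff_isUnit_det D).mp <| hD ▸
    isUnit_diagonal.mpr (Pi.isUnit_iff.mpr fun i => (hDiag i).isUnit)
  have hdr : ∀ k, d k = N⁻¹ *ᵥ (-(1 / (m : ℝ)) • r k) := fun k => funext fun i => by
    simp only [hNinv, mulVec_diagonal, hd, r, blockResidual, Pi.smul_apply, Pi.sub_apply,
      Pi.add_apply, smul_eq_mul]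
    ring
  have hstep : ∀ k, r (k + 1) =
      (1 - B * D⁻¹) *ᵥ ((1 - (1 / (m : ℝ)) • (Bt * s * N⁻¹)) *ᵥ r k) := fun k => by
    simp only [r, hx₁, hR, hx₂, hdr, blockResidual_jacobi_step B D hDunit,
      blockResidual_add_mulVec_mulVec_neg_smul]
  have hq0 : 0 ≤ q := hq ▸ mul_nonneg (matL1_nonneg _) (matL1_nonneg _)
  have hbound : ∀ k, vecL1 (r k) ≤ q ^ k * vecL1 (r 0) := fun k =>
    le_geom (u := fun k => vecL1 (r k)) hq0 k fun k _ => calc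
      vecL1 (r (k + 1)) ≤ matL1 (1 - B * D⁻¹) *
          (matL1 (1 - (1 / (m : ℝ)) • (Bt * s * N⁻¹)) * vecL1 (r k)) := by
        rw [hstep]
        exact (vecL1_mulVec_le _ _).trans
          (mul_le_mul_of_nonneg_left (vecL1_mulVec_le _ _) (matL1_nonneg _))
      _ = q * vecL1 (r k) := by rw [hq, mul_assoc]
  exact ⟨hbound, tendsto_zero_of_vecL1_le_geometric hq0 hq1 hbound⟩

/-- if `q = ‖I − B D⁻¹‖₁ ‖I − (1/m) B̃ s N⁻¹‖₁ < 1`, then the residuals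
of the generalized Jacobi iteration satisfy `‖res k‖₁ ≤ q^k ‖res 0‖₁`, and in
particular they converge to the zero vector. -/
theorem generalized_jacobi_residual_convergence
    (m p : ℕ) (hm : 0 < m) (hp : 0 < p)
    (B : Matrix (Fin m) (Fin m) ℝ) (Bt : Matrix (Fin m) (Fin p) ℝ) (b : Fin m → ℝ)
    (hDiag : ∀ i, B i i ≠ 0) (hRows : ∀ i, Bt i ≠ 0)
    (s : Matrix (Fin p) (Fin m) ℝ) (hs : ∀ j i, s j i = Real.sign (Bt i j))
    (N : Matrix (Fin m) (Fin m) ℝ)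
    (hN : N = Matrix.diagonal (fun i => ∑ j, |Bt i j|))
    (D : Matrix (Fin m) (Fin m) ℝ) (hD : D = Matrix.diagonal (fun i => B i i))
    (R : Matrix (Fin m) (Fin m) ℝ) (hR : R = B - D)
    (x₁ : ℕ → Fin m → ℝ) (x₂ : ℕ → Fin p → ℝ)
    (d : ℕ → Fin m → ℝ)
    (hd : ∀ k i, d k i = (b i - (B.mulVec (x₁ k)) i - (Bt.mulVec (x₂ k)) i) /
      ((m : ℝ) * ∑ j, |Bt i j|))
    (hx₂ : ∀ k, x₂ (k + 1) = x₂ k + s.mulVec (d k))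
    (hx₁ : ∀ k, x₁ (k + 1) = D⁻¹.mulVec (-(R.mulVec (x₁ k)) + (b - Bt.mulVec (x₂ (k + 1)))))
    (q : ℝ)
    (hq : q = matL1 (1 - B * D⁻¹) * matL1 (1 - (1 / (m : ℝ)) • (Bt * s * N⁻¹)))
    (hq1 : q < 1) :
    (∀ k, vecL1 (B.mulVec (x₁ k) + Bt.mulVec (x₂ k) - b) ≤
        q ^ k * vecL1 (B.mulVec (x₁ 0) + Bt.mulVec (x₂ 0) - b)) ∧
    Filter.Tendsto (fun k => B.mulVec (x₁ k) + Bt.mulVec (x₂ k) - b)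
      Filter.atTop (nhds 0) :=
  generalized_jacobi_residual_convergence_general m p B Bt b hDiag hRows s N hN D hD R hR x₁ x₂ d hd
    hx₂ hx₁ q hq hq1
end
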